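/- Under the one-factor model Σ = σ²ββᵀ + Δ with β₁ ≤ ⋯ ≤ β_p, δ_i² > 0, σ² > 0 and Σ_{j=1}^p β_j/δ_j² ≥ 0, let w^L be the LOMV solution with active set K = {1,…,k} where k < p (so the long-only constraints bind on some asset). Suppose q > 0 additional assets are appended, each with idiosyncratic variance > 0 and with beta greater than or equal to β_{k+1}, producing the enlarged ordered one-factor market of p + q assets. Then the active set K and the weights of the active assets in the LOMV solution of the enlarged problem are the same as in the original problem (the new LOMV solution assigns the original weights to assets 1,…,k and zero to all other assets). -/

import Mathlib

/-! On the simplex, `w` minimizes the positive semidefinite form `v ⬝ᵥ Σ *ᵥ v` exactly when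
`w ⬝ᵥ Σ *ᵥ w ≤ (Σ *ᵥ w) i` for every asset `i` (the KKT conditions, with multiplier
`w ⬝ᵥ Σ *ᵥ w`). In the one-factor model `(Σ *ᵥ w) i = σ² βᵢ (β ⬝ᵥ w) + δᵢ² wᵢ`, so for an
asset with zero weight the condition reads `w ⬝ᵥ Σ *ᵥ w ≤ σ² βᵢ (β ⬝ᵥ w)`. At the last asset,
whose beta is nonnegative by the sign convention, this forces `β ⬝ᵥ w > 0`; at asset `k + 1` it
shows that every appended asset with beta `≥ β_{k+1}` also satisfies the condition for `w`
extended by zeros, which is therefore optimal in the enlarged market. -/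

open Matrix Finset

open Filter Topology in
lemma nonneg_of_forall_nonneg_add_mul {a c : ℝ} (h : ∀ t ∈ Set.Ioc (0 : ℝ) 1, 0 ≤ a + t * c) :
    0 ≤ a := by
  have hlim : Tendsto (fun t : ℝ => a + t * c) (𝓝[>] 0) (𝓝 a) := by
    have hcont : Continuous fun t : ℝ => a + t * c := by fun_prop
    simpa using (hcont.tendsto 0).mono_left nhdsWithin_le_nhds
  exact ge_of_tendsto hlim (by filter_upwards [Ioc_mem_nhdsGT one_pos] with t ht using h t ht)

section Quadratic

variable {ι R : Type*} [Fintype ι]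

lemma sum_sum_mul_mul_eq_dotProduct_mulVec [NonUnitalSemiring R] (S : Matrix ι ι R) (v : ι → R) :
    ∑ i, ∑ j, v i * S i j * v j = v ⬝ᵥ S *ᵥ v := by
  simp only [dotProduct, mulVec, Finset.mul_sum, mul_assoc]

lemma Matrix.IsSymm.dotProduct_mulVec_add_self [CommSemiring R] {S : Matrix ι ι R}
    (hS : S.IsSymm) (w d : ι → R) :
    (w + d) ⬝ᵥ S *ᵥ (w + d) = w ⬝ᵥ S *ᵥ w + 2 * (d ⬝ᵥ S *ᵥ w) + d ⬝ᵥ S *ᵥ d := by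
  have hcomm : w ⬝ᵥ S *ᵥ d = d ⬝ᵥ S *ᵥ w := by
    rw [dotProduct_comm, dotProduct_mulVec, ← mulVec_transpose, hS.eq]
  rw [mulVec_add, add_dotProduct, dotProduct_add, dotProduct_add, hcomm]
  ring

variable {S : Matrix ι ι ℝ}

theorem Matrix.IsSymm.le_mulVec_of_isMinOn_stdSimplex [DecidableEq ι] (hS : S.IsSymm) {w : ι → ℝ}
    (hw : w ∈ stdSimplex ℝ ι) (hmin : IsMinOn (fun v => v ⬝ᵥ S *ᵥ v) (stdSimplex ℝ ι) w)
    (i : ι) : w ⬝ᵥ S *ᵥ w ≤ (S *ᵥ w) i := by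
  set d := Pi.single i 1 - w
  have hd : d ⬝ᵥ S *ᵥ w = (S *ᵥ w) i - w ⬝ᵥ S *ᵥ w := by
    simp only [d, sub_dotProduct, single_dotProduct, one_mul]
  suffices 0 ≤ 2 * (d ⬝ᵥ S *ᵥ w) by linarith
  refine nonneg_of_forall_nonneg_add_mul (c := d ⬝ᵥ S *ᵥ d) fun t ht => ?_
  have hmem : w + t • d ∈ stdSimplex ℝ ι :=
    (convex_stdSimplex ℝ ι).add_smul_sub_mem hw (single_mem_stdSimplex ℝ i)
      (Set.Ioc_subset_Icc_self ht)
  have hle := hmin hmem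
  simp only [Set.mem_ofPred_eq, hS.dotProduct_mulVec_add_self, smul_dotProduct, mulVec_smul,
    dotProduct_smul, smul_eq_mul] at hle
  nlinarith [ht.1]

theorem Matrix.PosSemidef.isMinOn_stdSimplex_of_le_mulVec (hS : S.PosSemidef) {w : ι → ℝ}
    (h : ∀ i, w ⬝ᵥ S *ᵥ w ≤ (S *ᵥ w) i) :
    IsMinOn (fun v => v ⬝ᵥ S *ᵥ v) (stdSimplex ℝ ι) w := by
  intro v hv
  have hvw : w ⬝ᵥ S *ᵥ w ≤ v ⬝ᵥ S *ᵥ w := calc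
    w ⬝ᵥ S *ᵥ w = ∑ i, v i * w ⬝ᵥ S *ᵥ w := by rw [← Finset.sum_mul, hv.2, one_mul]
    _ ≤ v ⬝ᵥ S *ᵥ w := Finset.sum_le_sum fun i _ => mul_le_mul_of_nonneg_left (h i) (hv.1 i)
  have hpsd : 0 ≤ (v - w) ⬝ᵥ S *ᵥ (v - w) := by simpa using hS.dotProduct_mulVec_nonneg (v - w)
  have hexp := (isHermitian_iff_isSymm.mp hS.isHermitian).dotProduct_mulVec_add_self w (v - w)
  rw [add_sub_cancel, sub_dotProduct] at hexp
  simp only [Set.mem_ofPred_eq]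
  linarith

end Quadratic

section OneFactor

variable {ι : Type*} [Fintype ι]

lemma nonneg_of_forall_le_of_sum_div_nonneg {β δsq : ι → ℝ} (hδ : ∀ j, 0 < δsq j)
    (hsign : 0 ≤ ∑ j, β j / δsq j) {i : ι} (hi : ∀ j, β j ≤ β i) : 0 ≤ β i := by
  by_contra! hneg
  have : ∑ j, β j / δsq j < 0 :=
    Finset.sum_neg (fun j _ => div_neg_of_neg_of_pos ((hi j).trans_lt hneg) (hδ j)) ⟨i, mem_univ i⟩
  linarith

variable [DecidableEq ι]

def oneFactorCov (σsq : ℝ) (β δsq : ι → ℝ) : Matrix ι ι ℝ :=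
  σsq • vecMulVec β β + diagonal δsq

lemma oneFactorCov_posDef {σsq : ℝ} (hσ : 0 ≤ σsq) (β : ι → ℝ) {δsq : ι → ℝ}
    (hδ : ∀ i, 0 < δsq i) : (oneFactorCov σsq β δsq).PosDef := by
  rw [oneFactorCov, add_comm]
  exact (PosDef.diagonal hδ).add_posSemidef ((posSemidef_vecMulVec_self_star β).smul hσ)

lemma oneFactorCov_mulVec_apply (σsq : ℝ) (β δsq v : ι → ℝ) (i : ι) :
    (oneFactorCov σsq β δsq *ᵥ v) i = σsq * β i * (β ⬝ᵥ v) + δsq i * v i := by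
  simp [oneFactorCov, add_mulVec, smul_mulVec, mulVec_diagonal, vecMulVec_mulVec]
  ring

end OneFactor

section Append

variable {p q : ℕ}

lemma append_zero_mem_stdSimplex {w : Fin p → ℝ} (hw : w ∈ stdSimplex ℝ (Fin p)) :
    Fin.append w (0 : Fin q → ℝ) ∈ stdSimplex ℝ (Fin (p + q)) := by
  refine ⟨fun i => Fin.addCases (fun i => by simpa using hw.1 i) (fun j => by simp) i, ?_⟩
  simpa [Fin.sum_univ_add] using hw.2

lemma append_dotProduct_append_zero (β w : Fin p → ℝ) (γ : Fin q → ℝ) :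
    Fin.append β γ ⬝ᵥ Fin.append w 0 = β ⬝ᵥ w := by
  simp [dotProduct, Fin.sum_univ_add]

lemma append_zero_dotProduct_append (w u : Fin p → ℝ) (u' : Fin q → ℝ) :
    Fin.append w 0 ⬝ᵥ Fin.append u u' = w ⬝ᵥ u := by
  simp [dotProduct, Fin.sum_univ_add]

lemma oneFactorCov_append_mulVec_append_zero (σsq : ℝ) (β δsq w : Fin p → ℝ)
    (γ δsq' : Fin q → ℝ) :
    oneFactorCov σsq (Fin.append β γ) (Fin.append δsq δsq') *ᵥ Fin.append w 0
      = Fin.append (oneFactorCov σsq β δsq *ᵥ w) fun j => σsq * γ j * (β ⬝ᵥ w) := by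
  ext i
  refine Fin.addCases (fun i => ?_) (fun j => ?_) i <;>
    simp [oneFactorCov_mulVec_apply, append_dotProduct_append_zero]

end Append

theorem lomv_unaffected_by_adding_high_beta_assets_general {p q : ℕ}
    (σsq : ℝ) (hσ : 0 < σsq)
    (β δsq : Fin p → ℝ) (hδ : ∀ i, 0 < δsq i)
    (hmono : Monotone β)
    (hsign : 0 ≤ ∑ j, β j / δsq j)
    (S : Matrix (Fin p) (Fin p) ℝ)
    (hS : S = σsq • Matrix.vecMulVec β β + Matrix.diagonal δsq)
    -- w is the (unique) LOMV solution for the original p-asset market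
    (w : Fin p → ℝ)
    (hsum : ∑ i, w i = 1)
    (hnonneg : ∀ i, 0 ≤ w i)
    (hmin : ∀ v : Fin p → ℝ, (∑ i, v i = 1) → (∀ i, 0 ≤ v i) →
      ∑ i, ∑ j, w i * S i j * w j ≤ ∑ i, ∑ j, v i * S i j * v j)
    -- its active set is K = {1,…,k} with k < p (the constraints bind somewhere)
    (k : ℕ) (hk : k < p)
    (hact : ∀ i : Fin p, 0 < w i ↔ (i : ℕ) < k)
    -- q new assets, each with positive idiosyncratic variance and beta ≥ β_{k+1}
    (γ δsq' : Fin q → ℝ) (hδ' : ∀ j, 0 < δsq' j)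
    (hγ : ∀ j, β ⟨k, hk⟩ ≤ γ j)
    (S' : Matrix (Fin (p + q)) (Fin (p + q)) ℝ)
    (hS' : S' = σsq • Matrix.vecMulVec (Fin.append β γ) (Fin.append β γ)
        + Matrix.diagonal (Fin.append δsq δsq')) :
    -- the vector extending w by zeros is the LOMV solution of the enlarged market
    (∑ i, Fin.append w (fun _ : Fin q => (0 : ℝ)) i = 1)
    ∧ (∀ i, 0 ≤ Fin.append w (fun _ : Fin q => (0 : ℝ)) i)
    ∧ (∀ v : Fin (p + q) → ℝ, (∑ i, v i = 1) → (∀ i, 0 ≤ v i) →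
        ∑ i, ∑ j, Fin.append w (fun _ : Fin q => (0 : ℝ)) i * S' i j
            * Fin.append w (fun _ : Fin q => (0 : ℝ)) j
          ≤ ∑ i, ∑ j, v i * S' i j * v j) := by
  change S = oneFactorCov σsq β δsq at hS
  change S' = oneFactorCov σsq (Fin.append β γ) (Fin.append δsq δsq') at hS'
  subst hS hS'
  simp only [sum_sum_mul_mul_eq_dotProduct_mulVec, ← Pi.zero_def] at hmin ⊢
  have hw : w ∈ stdSimplex ℝ (Fin p) := ⟨hnonneg, hsum⟩
  have hw' := append_zero_mem_stdSimplex (q := q) hw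
  refine ⟨hw'.2, hw'.1, fun v hv₁ hv₀ => ?_⟩
  have hposDef := oneFactorCov_posDef hσ.le β hδ
  have hkkt := (isHermitian_iff_isSymm.mp hposDef.isHermitian).le_mulVec_of_isMinOn_stdSimplex
    hw fun v hv => hmin v hv.2 hv.1
  have hkkt_inactive : ∀ i : Fin p, k ≤ i →
      w ⬝ᵥ oneFactorCov σsq β δsq *ᵥ w ≤ σsq * β i * (β ⬝ᵥ w) := fun i hi => by
    have hwi : w i = 0 := le_antisymm (not_lt.mp fun h => ((hact i).mp h).not_ge hi) (hnonneg i)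
    simpa [oneFactorCov_mulVec_apply, hwi] using hkkt i
  have hpos : 0 < w ⬝ᵥ oneFactorCov σsq β δsq *ᵥ w :=
    hposDef.dotProduct_mulVec_pos fun h => by simp [h] at hsum
  let L : Fin p := ⟨p - 1, by omega⟩
  have hβL : 0 ≤ β L := nonneg_of_forall_le_of_sum_div_nonneg hδ hsign fun j =>
    hmono (Fin.mk_le_mk.mpr (by omega))
  have hB : 0 < β ⬝ᵥ w := pos_of_mul_pos_right
    (hpos.trans_le (hkkt_inactive L (by simp only [L]; omega))) (mul_nonneg hσ.le hβL)
  have hδ'' : ∀ i, 0 < Fin.append δsq δsq' i :=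
    Fin.addCases (fun i => by simpa using hδ i) (fun j => by simpa using hδ' j)
  refine (oneFactorCov_posDef hσ.le _ hδ'').posSemidef.isMinOn_stdSimplex_of_le_mulVec
    (fun i => ?_) ⟨hv₀, hv₁⟩
  rw [oneFactorCov_append_mulVec_append_zero, append_zero_dotProduct_append]
  refine Fin.addCases (fun i => by simpa using hkkt i) (fun j => ?_) i
  rw [Fin.append_right]
  calc w ⬝ᵥ oneFactorCov σsq β δsq *ᵥ w ≤ σsq * β ⟨k, hk⟩ * (β ⬝ᵥ w) := hkkt_inactive _ le_rfl
    _ ≤ σsq * γ j * (β ⬝ᵥ w) := by gcongr; exact hγ j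

/-- **Corollary of Theorem 1.** Under the one-factor model with ordered
betas, positive idiosyncratic variances and the sign convention `∑ βⱼ/δⱼ² ≥ 0`,
suppose the LOMV solution `w` has active set `K = {1,…,k}` with `k < p`.  If `q > 0`
additional assets with positive idiosyncratic variances and betas `≥ β_{k+1}` are
appended to the market, then the LOMV solution of the enlarged `(p+q)`-asset problem
assigns the original weights to the first `k` assets and zero to all other assets;
in particular the active set and the active weights are unchanged. -/
theorem lomv_unaffected_by_adding_high_beta_assets {p q : ℕ} (hp : 0 < p) (hq : 0 < q)
    (σsq : ℝ) (hσ : 0 < σsq)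
    (β δsq : Fin p → ℝ) (hδ : ∀ i, 0 < δsq i)
    (hmono : Monotone β)
    (hsign : 0 ≤ ∑ j, β j / δsq j)
    (S : Matrix (Fin p) (Fin p) ℝ)
    (hS : S = σsq • Matrix.vecMulVec β β + Matrix.diagonal δsq)
    -- w is the (unique) LOMV solution for the original p-asset market
    (w : Fin p → ℝ)
    (hsum : ∑ i, w i = 1)
    (hnonneg : ∀ i, 0 ≤ w i)
    (hmin : ∀ v : Fin p → ℝ, (∑ i, v i = 1) → (∀ i, 0 ≤ v i) →
      ∑ i, ∑ j, w i * S i j * w j ≤ ∑ i, ∑ j, v i * S i j * v j)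
    -- its active set is K = {1,…,k} with k < p (the constraints bind somewhere)
    (k : ℕ) (hk : k < p)
    (hact : ∀ i : Fin p, 0 < w i ↔ (i : ℕ) < k)
    -- q new assets, each with positive idiosyncratic variance and beta ≥ β_{k+1}
    (γ δsq' : Fin q → ℝ) (hδ' : ∀ j, 0 < δsq' j)
    (hγ : ∀ j, β ⟨k, hk⟩ ≤ γ j)
    (S' : Matrix (Fin (p + q)) (Fin (p + q)) ℝ)
    (hS' : S' = σsq • Matrix.vecMulVec (Fin.append β γ) (Fin.append β γ)
        + Matrix.diagonal (Fin.append δsq δsq')) :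
    -- the vector extending w by zeros is the LOMV solution of the enlarged market
    (∑ i, Fin.append w (fun _ : Fin q => (0 : ℝ)) i = 1)
    ∧ (∀ i, 0 ≤ Fin.append w (fun _ : Fin q => (0 : ℝ)) i)
    ∧ (∀ v : Fin (p + q) → ℝ, (∑ i, v i = 1) → (∀ i, 0 ≤ v i) →
        ∑ i, ∑ j, Fin.append w (fun _ : Fin q => (0 : ℝ)) i * S' i j
            * Fin.append w (fun _ : Fin q => (0 : ℝ)) j
          ≤ ∑ i, ∑ j, v i * S' i j * v j) :=
  lomv_unaffected_by_adding_high_beta_assets_general σsq hσ β δsq hδ hmono hsign S hS w hsum hnonneg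
    hmin k hk hact γ δsq' hδ' hγ S' hS'
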